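/- arXiv:1608.01824 — 3 statements merged into one kernel-verified Lean document; each statement's English description precedes it below -/
import Mathlib

section
/- Let N be a Poisson random variable with mean λ > 0. Then for every positive integer r, E[|N - λ|^r] ≤ r^r (max(1, λ))^{r/2}. -/
/-!
Write `A r = E|N - λ|^r`. The Stein–Chen identity `E[N f(N)] = λ E[f(N + 1)]` applied to
`f(n) = |n - λ|^d (n - λ)` gives `A (d + 2) = λ E[f(N + 1) - f(N)]`, and the mean value theorem
for `y ↦ |y|^d y` bounds the increment by `(d + 1) (|N - λ| + 1)^d`; expanding binomially,
`A (d + 2) ≤ λ (d + 1) Σ_k C(d, k) A k`. With `s = √(max 1 λ)`, so that `1 ≤ s` and `λ ≤ s²`,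
strong induction gives `A r ≤ r^r s^r`: the inductive step is
`λ (d + 1) (d s + 1)^d ≤ (d + 1)^(d + 1) s^(d + 2)`, and the case `r = 1` follows from `A 2 ≤ λ`
by AM–GM.
-/

open MeasureTheory ProbabilityTheory NNReal Real Finset
open scoped Nat

/-- The mean value bound for `φ y = |y|^s y`, whose derivative is `(s + 1) |y|^s`. -/
theorem abs_add_one_pow_mul_sub_abs_pow_mul_le (s : ℕ) (x : ℝ) :
    |x + 1| ^ s * (x + 1) - |x| ^ s * x ≤ (s + 1) * (|x| + 1) ^ s := by
  have hpow (a b : ℝ) (hab : a - b = 1) (ha : |a| ≤ |x| + 1) (hb : |b| ≤ |x| + 1) :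
      a ^ (s + 1) - b ^ (s + 1) ≤ (s + 1) * (|x| + 1) ^ s :=
    calc a ^ (s + 1) - b ^ (s + 1) ≤ |a ^ (s + 1) - b ^ (s + 1)| := le_abs_self _
      _ ≤ |a - b| * (s + 1 : ℕ) * max |a| |b| ^ s := abs_pow_sub_pow_le ..
      _ ≤ (s + 1) * (|x| + 1) ^ s := by
        rw [hab, abs_one, one_mul]; push_cast; gcongr; exact max_le ha hb
  have hx_le : |x| ≤ |x| + 1 := by linarith
  have hx1_le : |x + 1| ≤ |x| + 1 := by simpa using abs_add_le x 1
  rcases le_total 0 x with hx | hx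
  · have h : |x + 1| ^ s * (x + 1) - |x| ^ s * x = (x + 1) ^ (s + 1) - x ^ (s + 1) := by
      rw [abs_of_nonneg hx, abs_of_nonneg (by linarith)]; ring
    exact h ▸ hpow _ _ (by ring) hx1_le hx_le
  rcases le_total (x + 1) 0 with hx1 | hx1
  · have h : |x + 1| ^ s * (x + 1) - |x| ^ s * x = (-x) ^ (s + 1) - (-(x + 1)) ^ (s + 1) := by
      rw [abs_of_nonpos hx, abs_of_nonpos hx1]; ring
    exact h ▸ hpow _ _ (by ring) (by rwa [abs_neg]) (by rwa [abs_neg])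
  · rw [abs_of_nonpos hx, abs_of_nonneg hx1]
    have h₁ : (x + 1) ^ s * (x + 1) ≤ x + 1 :=
      mul_le_of_le_one_left hx1 (pow_le_one₀ hx1 (by linarith))
    have h₂ : (-x) ^ s * (-x) ≤ -x :=
      mul_le_of_le_one_left (by linarith) (pow_le_one₀ (by linarith) (by linarith))
    have h₃ : 1 ≤ (s + 1 : ℝ) * (-x + 1) ^ s :=
      one_le_mul_of_one_le_of_one_le (by simp) (one_le_pow₀ (by linarith))
    linarith

theorem abs_sub_le_add_of_nonneg {x y : ℝ} (hx : 0 ≤ x) (hy : 0 ≤ y) : |x - y| ≤ x + y :=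
  (abs_sub _ _).trans_eq (by rw [abs_of_nonneg hx, abs_of_nonneg hy])

namespace ProbabilityTheory

variable (lam : ℝ≥0)

theorem integrable_exp_poissonMeasure : Integrable (fun n : ℕ ↦ exp n) Po(lam) := by
  rw [integrable_poissonMeasure_iff]
  refine ((summable_pow_div_factorial (exp 1 * lam)).mul_left (exp (-lam))).congr fun n ↦ ?_
  rw [norm_of_nonneg (exp_pos _).le, mul_pow, ← exp_nat_mul, mul_one]
  ring

variable {lam} in
theorem integrable_poissonMeasure_of_norm_le_add_pow {c : ℝ} (hc : 0 ≤ c) (k : ℕ)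
    {g : ℕ → ℝ} (hg : ∀ n, ‖g n‖ ≤ ((n : ℝ) + c) ^ k) : Integrable g Po(lam) := by
  refine ((integrable_exp_poissonMeasure lam).const_mul (k ! * exp c)).mono'
    StronglyMeasurable.of_discrete.aestronglyMeasurable (ae_of_all _ fun n ↦ ?_)
  calc ‖g n‖ ≤ ((n : ℝ) + c) ^ k := hg n
    _ ≤ k ! * exp (n + c) := by
      rw [← div_le_iff₀' (by positivity)]
      exact pow_div_factorial_le_exp _ (by positivity) k
    _ = k ! * exp c * exp n := by rw [exp_add]; ring

theorem integrable_abs_sub_pow_poissonMeasure (k : ℕ) :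
    Integrable (fun n : ℕ ↦ |(n : ℝ) - lam| ^ k) Po(lam) :=
  integrable_poissonMeasure_of_norm_le_add_pow lam.2 k fun n ↦ by
    rw [norm_of_nonneg (by positivity)]
    exact pow_le_pow_left₀ (abs_nonneg _) (abs_sub_le_add_of_nonneg n.cast_nonneg lam.2) k

/-- No integrability is needed: by `integral_poissonMeasure` both sides are sums that converge or
diverge together. -/
theorem integral_natCast_mul_poissonMeasure (f : ℕ → ℝ) :
    ∫ n, (n : ℝ) * f n ∂Po(lam) = lam * ∫ n, f (n + 1) ∂Po(lam) := by
  simp only [integral_poissonMeasure, smul_eq_mul]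
  have hshift (g : ℕ → ℝ) (hg : g 0 = 0) : ∑' n, g n = ∑' n, g (n + 1) :=
    (tsum_pnat_eq_tsum_of_eq_zero hg).symm.trans tsum_pnat_eq_tsum_succ
  rw [hshift _ (by simp), ← _root_.tsum_mul_left]
  congr with n
  rw [Nat.factorial_succ]
  push_cast
  field_simp
  ring

theorem integral_abs_sub_add_one_pow_poissonMeasure (d : ℕ) :
    ∫ n, (|(n : ℝ) - lam| + 1) ^ d ∂Po(lam) =
      ∑ k ∈ range (d + 1), d.choose k * ∫ n, |(n : ℝ) - lam| ^ k ∂Po(lam) := by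
  simp_rw [add_pow, one_pow, mul_one]
  rw [integral_finsetSum _ fun k _ ↦ (integrable_abs_sub_pow_poissonMeasure lam k).mul_const _]
  simp_rw [integral_mul_const, mul_comm]

theorem integral_abs_sub_pow_add_two_poissonMeasure_le (d : ℕ) :
    ∫ n, |(n : ℝ) - lam| ^ (d + 2) ∂Po(lam) ≤
      lam * (d + 1) *
        ∑ k ∈ range (d + 1), d.choose k * ∫ n, |(n : ℝ) - lam| ^ k ∂Po(lam) := by
  set f : ℕ → ℝ := fun n ↦ |(n : ℝ) - lam| ^ d * ((n : ℝ) - lam)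
  have hf : Integrable f Po(lam) :=
    integrable_poissonMeasure_of_norm_le_add_pow lam.2 (d + 1) fun n ↦ by
      simp only [f, norm_mul, norm_pow, Real.norm_eq_abs, abs_abs, ← pow_succ]
      exact pow_le_pow_left₀ (abs_nonneg _) (abs_sub_le_add_of_nonneg n.cast_nonneg lam.2) _
  have hf_succ : Integrable (fun n ↦ f (n + 1)) Po(lam) :=
    integrable_poissonMeasure_of_norm_le_add_pow (by positivity : (0 : ℝ) ≤ 1 + lam) (d + 1)
      fun n ↦ by
        simp only [f, norm_mul, norm_pow, Real.norm_eq_abs, abs_abs, ← pow_succ, Nat.cast_succ,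
          ← add_assoc]
        exact pow_le_pow_left₀ (abs_nonneg _) (abs_sub_le_add_of_nonneg (by positivity) lam.2) _
  have hsq (n : ℕ) : |(n : ℝ) - lam| ^ (d + 2) = ((n : ℝ) - lam) * f n := by
    rw [pow_add, sq_abs]; ring
  have hnf : Integrable (fun n : ℕ ↦ (n : ℝ) * f n) Po(lam) :=
    ((integrable_abs_sub_pow_poissonMeasure lam (d + 2)).add (hf.const_mul lam)).congr
      (ae_of_all _ fun n ↦ by simp only [Pi.add_apply, hsq]; ring)
  have hbound : Integrable (fun n : ℕ ↦ (d + 1 : ℝ) * (|(n : ℝ) - lam| + 1) ^ d) Po(lam) :=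
    (integrable_poissonMeasure_of_norm_le_add_pow (by positivity : (0 : ℝ) ≤ lam + 1) d
      fun n ↦ by
        rw [norm_of_nonneg (by positivity), ← add_assoc]
        gcongr
        exact abs_sub_le_add_of_nonneg n.cast_nonneg lam.2).const_mul _
  calc ∫ n, |(n : ℝ) - lam| ^ (d + 2) ∂Po(lam)
      = ∫ n, (n : ℝ) * f n ∂Po(lam) - lam * ∫ n, f n ∂Po(lam) := by
        rw [← integral_const_mul, ← integral_sub hnf (hf.const_mul _)]
        simp only [hsq, sub_mul]
    _ = lam * ∫ n, (f (n + 1) - f n) ∂Po(lam) := by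
        rw [integral_natCast_mul_poissonMeasure, integral_sub hf_succ hf, mul_sub]
    _ ≤ lam * ∫ n, (d + 1 : ℝ) * (|(n : ℝ) - lam| + 1) ^ d ∂Po(lam) := by
        refine mul_le_mul_of_nonneg_left (integral_mono (hf_succ.sub hf) hbound fun n ↦ ?_) lam.2
        simp only [f, Nat.cast_succ, add_sub_right_comm]
        exact abs_add_one_pow_mul_sub_abs_pow_mul_le d ((n : ℝ) - lam)
    _ = _ := by
        rw [integral_const_mul, integral_abs_sub_add_one_pow_poissonMeasure, mul_assoc]

theorem integral_abs_sub_sq_poissonMeasure_le :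
    ∫ n, |(n : ℝ) - lam| ^ 2 ∂Po(lam) ≤ lam := by
  simpa using integral_abs_sub_pow_add_two_poissonMeasure_le lam 0

theorem integral_abs_sub_poissonMeasure_le {s : ℝ} (hs : 0 < s) (hlam : (lam : ℝ) ≤ s ^ 2) :
    ∫ n, |(n : ℝ) - lam| ∂Po(lam) ≤ s := by
  have hsq := integrable_abs_sub_pow_poissonMeasure lam 2
  have hamgm : ∫ n, 2 * s * |(n : ℝ) - lam| ∂Po(lam) ≤
      ∫ n, (|(n : ℝ) - lam| ^ 2 + s ^ 2) ∂Po(lam) :=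
    integral_mono (by simpa using (integrable_abs_sub_pow_poissonMeasure lam 1).const_mul (2 * s))
      (hsq.add (integrable_const (s ^ 2)))
      fun n ↦ by nlinarith [two_mul_le_add_sq s |(n : ℝ) - lam|]
  rw [integral_const_mul, integral_add hsq (integrable_const _)] at hamgm
  simp only [integral_const, probReal_univ, smul_eq_mul, one_mul] at hamgm
  nlinarith [integral_abs_sub_sq_poissonMeasure_le lam]

theorem integral_abs_sub_pow_poissonMeasure_le {s : ℝ} (hs : 1 ≤ s) (hlam : (lam : ℝ) ≤ s ^ 2)
    (r : ℕ) :
    ∫ n, |(n : ℝ) - lam| ^ r ∂Po(lam) ≤ r ^ r * s ^ r := by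
  induction r using Nat.strong_induction_on with
  | _ r ih =>
  match r with
  | 0 => simp
  | 1 => simpa using integral_abs_sub_poissonMeasure_le lam (by positivity) hlam
  | d + 2 =>
    have hmoment_le (k : ℕ) (hk : k ∈ range (d + 1)) :
        ∫ n, |(n : ℝ) - lam| ^ k ∂Po(lam) ≤ (d * s) ^ k := by
      have hkd : k ≤ d := Nat.lt_succ_iff.mp (mem_range.mp hk)
      calc ∫ n, |(n : ℝ) - lam| ^ k ∂Po(lam) ≤ k ^ k * s ^ k := ih k (by omega)
        _ ≤ (d * s) ^ k := by rw [← mul_pow]; gcongr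
    calc ∫ n, |(n : ℝ) - lam| ^ (d + 2) ∂Po(lam)
        ≤ lam * (d + 1) *
            ∑ k ∈ range (d + 1), d.choose k * ∫ n, |(n : ℝ) - lam| ^ k ∂Po(lam) :=
          integral_abs_sub_pow_add_two_poissonMeasure_le lam d
      _ ≤ s ^ 2 * (d + 1) * ∑ k ∈ range (d + 1), d.choose k * (d * s) ^ k := by
          gcongr with k hk
          exact hmoment_le k hk
      _ = s ^ 2 * (d + 1) * (d * s + 1) ^ d := by
          simp_rw [add_pow, one_pow, mul_one, mul_comm]
      _ ≤ s ^ 2 * (d + 1) * ((d + 1) * s) ^ d := by gcongr; linarith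
      _ = ((d + 1 : ℕ) : ℝ) ^ (d + 1) * s ^ (d + 2) := by push_cast; rw [mul_pow]; ring
      _ ≤ ((d + 2 : ℕ) : ℝ) ^ (d + 2) * s ^ (d + 2) := by
          gcongr ?_ * _
          exact_mod_cast (Nat.pow_le_pow_left (Nat.le_succ _) _).trans
            (Nat.pow_le_pow_right (by omega) (Nat.le_succ _))

end ProbabilityTheory

theorem poisson_central_moment_general (lam : ℝ≥0) (r : ℕ) :
    ∫⁻ n, ENNReal.ofReal (|(n : ℝ) - (lam : ℝ)| ^ r) ∂(poissonMeasure lam) ≤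
      ENNReal.ofReal ((r : ℝ) ^ r * (max 1 (lam : ℝ)) ^ ((r : ℝ) / 2)) := by
  set s := √(max 1 (lam : ℝ)) with hs_def
  have hs : 1 ≤ s := one_le_sqrt.mpr (le_max_left _ _)
  have hlam : (lam : ℝ) ≤ s ^ 2 := by
    rw [sq_sqrt (by positivity)]; exact le_max_right _ _
  have hsr : s ^ r = (max 1 (lam : ℝ)) ^ ((r : ℝ) / 2) := by
    rw [hs_def, Real.sqrt_eq_rpow, ← Real.rpow_natCast, ← rpow_mul (by positivity)]
    ring_nf
  rw [← ofReal_integral_eq_lintegral_ofReal (integrable_abs_sub_pow_poissonMeasure lam r)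
    (ae_of_all _ fun n ↦ by positivity), ← hsr]
  exact ENNReal.ofReal_le_ofReal (integral_abs_sub_pow_poissonMeasure_le lam hs hlam r)

/-- Central absolute moments of a Poisson random variable:
`E[|N - λ|^r] ≤ r^r (max 1 λ)^{r/2}`. -/
theorem poisson_central_moment (lam : ℝ≥0) (hlam : 0 < lam) (r : ℕ) (hr : 0 < r) :
    ∫⁻ n, ENNReal.ofReal (|(n : ℝ) - (lam : ℝ)| ^ r) ∂(poissonMeasure lam) ≤
      ENNReal.ofReal ((r : ℝ) ^ r * (max 1 (lam : ℝ)) ^ ((r : ℝ) / 2)) :=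
  poisson_central_moment_general lam r
end

section
/- Let m ≥ 1 and let (p_j), (q_j), (β_j) be real vectors with 0 ≤ p_j, q_j ≤ 1 and β_j ≥ 0, such that for some 0 ≤ ω ≤ 1/2 one has p_j ≥ q_j + q_j(1-q_j) ω β_j for all j. Let Z_j(p_j) (resp. Z_j(q_j)) be independent Bernoulli random variables with success probabilities p_j (resp. q_j). Then for every real A: P(Σ_j β_j Z_j(p_j) > A) ≥ exp(ω A - ω Σ_j β_j q_j - 2ω² Σ_j β_j²) · P(Σ_j β_j Z_j(q_j) > A). -/
/-!
Fix a configuration `v` of the event `E = {A < ∑ β_j v_j}`. Since `ω A ≤ ω ∑ β_j v_j`, the factor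
`exp (ω A - ω ∑ β_j q_j - 2 ω² ∑ β_j²)` is at most `∏_j exp (ω β_j (v_j - q_j) - 2 ω² β_j²)`, and
the bounds `log (1 + x) ≥ x - x²` (`x ≥ 0`) and `log (1 - x) ≥ -x - 2 x²` (`x ≤ 1/2`) bound the
`j`-th factor times `P_{q_j}(v_j)` by `P_{s_j}(v_j)`, where
`s_j = q_j + q_j (1 - q_j) min (ω β_j) (1/2) ≤ p_j`; the cap at `1/2` keeps the second bound
applicable. Summing over `E` gives the inequality with `s` in place of `p`, and since `E` is an
upper set of `Fin m → Bool`, its probability is monotone in the success probabilities.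
-/

open MeasureTheory ProbabilityTheory NNReal ENNReal Finset

lemma Real.sub_sq_le_log_one_add {x : ℝ} (hx : 0 ≤ x) : x - x ^ 2 ≤ Real.log (1 + x) := by
  refine le_trans ?_ (Real.one_sub_inv_le_log_of_pos (by linarith : 0 < 1 + x))
  rw [le_sub_iff_add_le', ← le_sub_iff_add_le, inv_le_iff_one_le_mul₀ (by linarith)]
  nlinarith [pow_nonneg hx 3]

lemma Real.neg_sub_two_mul_sq_le_log_one_sub {x : ℝ} (hx : x ≤ 1 / 2) :
    -x - 2 * x ^ 2 ≤ Real.log (1 - x) := by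
  refine le_trans ?_ (Real.one_sub_inv_le_log_of_pos (by linarith : 0 < 1 - x))
  rw [le_sub_iff_add_le', ← le_sub_iff_add_le, inv_le_iff_one_le_mul₀ (by linarith)]
  nlinarith [mul_nonneg (sq_nonneg x) (by linarith : 0 ≤ 1 - 2 * x)]

noncomputable def tiltedProb (a t : ℝ) : ℝ := a + a * (1 - a) * min t (1 / 2)

lemma tiltedProb_nonneg {a t : ℝ} (ha0 : 0 ≤ a) (ha1 : a ≤ 1) (ht : 0 ≤ t) :
    0 ≤ tiltedProb a t :=
  add_nonneg ha0 (mul_nonneg (mul_nonneg ha0 (sub_nonneg.2 ha1)) (le_min ht (by norm_num)))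

lemma tiltedProb_le {a t : ℝ} (ha0 : 0 ≤ a) (ha1 : a ≤ 1) :
    tiltedProb a t ≤ a + a * (1 - a) * t := by
  unfold tiltedProb
  gcongr
  exact min_le_left _ _

lemma exp_mul_ite_le_ite_tiltedProb {a t : ℝ} (ha0 : 0 ≤ a) (ha1 : a ≤ 1) (ht : 0 ≤ t)
    (b : Bool) :
    Real.exp (t * ((if b then 1 else 0) - a) - 2 * t ^ 2) * (if b then a else 1 - a) ≤
      if b then tiltedProb a t else 1 - tiltedProb a t := by
  have hu0 : 0 ≤ min t (1 / 2) := le_min ht (by norm_num)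
  have hut : min t (1 / 2) ≤ t := min_le_left _ _
  have hu2 : min t (1 / 2) ≤ 1 / 2 := min_le_right _ _
  have hcap : min t (1 / 2) = t ∨ min t (1 / 2) = 1 / 2 ∧ 1 / 2 ≤ t := by
    rcases le_total t (1 / 2) with h | h
    exacts [.inl (min_eq_left h), .inr ⟨min_eq_right h, h⟩]
  unfold tiltedProb
  generalize min t (1 / 2) = u at *
  cases b <;> simp only [Bool.false_eq_true, if_false, if_true]
  · have hau : a * u ≤ u := mul_le_of_le_one_left hu0 ha1
    have hexp : Real.exp (t * (0 - a) - 2 * t ^ 2) ≤ 1 - a * u := calc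
      _ ≤ Real.exp (-(a * u) - 2 * (a * u) ^ 2) := Real.exp_le_exp.2 <| by
        nlinarith [mul_le_mul_of_nonneg_left hut ha0, mul_le_mul hut hut hu0 ht,
          mul_le_mul hau hau (by positivity) hu0]
      _ ≤ 1 - a * u := (Real.le_log_iff_exp_le (by nlinarith)).1
        (Real.neg_sub_two_mul_sq_le_log_one_sub (by nlinarith))
    nlinarith [mul_le_mul_of_nonneg_right hexp (by linarith : 0 ≤ 1 - a)]
  · have hexp : Real.exp (t * (1 - a) - 2 * t ^ 2) ≤ 1 + (1 - a) * u := calc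
      _ ≤ Real.exp ((1 - a) * u - ((1 - a) * u) ^ 2) := Real.exp_le_exp.2 <| by
        rcases hcap with rfl | ⟨rfl, h⟩
        · nlinarith [mul_le_mul_of_nonneg_left ha1 ha0]
        · nlinarith
      _ ≤ 1 + (1 - a) * u := (Real.le_log_iff_exp_le (by nlinarith)).1
        (Real.sub_sq_le_log_one_add (by nlinarith))
    nlinarith [mul_le_mul_of_nonneg_right hexp ha0]

section

variable {ι : Type*} [Fintype ι]

def bernoulliWeight (r : ι → ℝ) (v : ι → Bool) : ℝ := ∏ j, if v j then r j else 1 - r j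

lemma ite_one_sub_nonneg {a : ℝ} (ha0 : 0 ≤ a) (ha1 : a ≤ 1) (b : Bool) :
    0 ≤ if b then a else 1 - a := by
  split_ifs <;> linarith

lemma bernoulliWeight_nonneg {r : ι → ℝ} (hr0 : 0 ≤ r) (hr1 : r ≤ 1) (v : ι → Bool) :
    0 ≤ bernoulliWeight r v :=
  prod_nonneg fun j _ => ite_one_sub_nonneg (hr0 j) (hr1 j) (v j)

lemma exp_sum_mul_bernoulliWeight_le {a t : ι → ℝ} (ha0 : 0 ≤ a) (ha1 : a ≤ 1) (ht : 0 ≤ t)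
    (v : ι → Bool) :
    Real.exp (∑ j, (t j * ((if v j then 1 else 0) - a j) - 2 * t j ^ 2)) * bernoulliWeight a v ≤
      bernoulliWeight (fun j => tiltedProb (a j) (t j)) v := by
  rw [Real.exp_sum, bernoulliWeight, ← prod_mul_distrib]
  exact prod_le_prod
    (fun j _ => mul_nonneg (Real.exp_nonneg _) (ite_one_sub_nonneg (ha0 j) (ha1 j) (v j)))
    fun j _ => exp_mul_ite_le_ite_tiltedProb (ha0 j) (ha1 j) (ht j) (v j)

lemma exp_mul_bernoulliWeight_le_of_lt_sum {a β : ι → ℝ} {ω A : ℝ} (ha0 : 0 ≤ a) (ha1 : a ≤ 1)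
    (hβ : ∀ j, 0 ≤ β j) (hω : 0 ≤ ω) {v : ι → Bool}
    (hv : A < ∑ j, β j * (if v j then 1 else 0)) :
    Real.exp (ω * A - ω * ∑ j, β j * a j - 2 * ω ^ 2 * ∑ j, β j ^ 2) * bernoulliWeight a v ≤
      bernoulliWeight (fun j => tiltedProb (a j) (ω * β j)) v := by
  refine le_trans (mul_le_mul_of_nonneg_right (Real.exp_le_exp.2 ?_)
    (bernoulliWeight_nonneg ha0 ha1 v))
    (exp_sum_mul_bernoulliWeight_le ha0 ha1 (fun j => mul_nonneg hω (hβ j)) v)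
  calc _ ≤ ω * ∑ j, β j * (if v j then 1 else 0) - ω * ∑ j, β j * a j -
        2 * ω ^ 2 * ∑ j, β j ^ 2 := by linarith [mul_le_mul_of_nonneg_left hv.le hω]
    _ = _ := by
      simp only [mul_sum, ← sum_sub_distrib]
      exact sum_congr rfl fun j _ => by ring

lemma measure_pi_bernoulli_eq [DecidableEq ι] (r : ι → ℝ≥0) (hr : ∀ j, r j ≤ 1)
    (S : Set (ι → Bool)) :
    Measure.pi (fun j => (PMF.bernoulli (r j) (hr j)).toMeasure) S =
      ENNReal.ofReal (∑ v, S.indicator (bernoulliWeight fun j => (r j : ℝ)) v) := by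
  have hr1 : (fun j => (r j : ℝ)) ≤ 1 := fun j => by exact_mod_cast hr j
  rw [← lintegral_indicator_one (.of_discrete), lintegral_fintype, ofReal_sum_of_nonneg]
  swap
  · exact fun v _ =>
      Set.indicator_nonneg (fun v _ => bernoulliWeight_nonneg (fun j => (r j).2) hr1 v) v
  refine sum_congr rfl fun v _ => ?_
  by_cases hv : v ∈ S
  · simp only [Set.indicator_of_mem hv, Pi.one_apply, one_mul, Measure.pi_singleton,
      PMF.toMeasure_apply_singleton _ _ (measurableSet_singleton _), bernoulliWeight]
    rw [ENNReal.ofReal_prod_of_nonneg]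
    swap
    · exact fun j _ => ite_one_sub_nonneg (r j).2 (hr1 j) (v j)
    refine prod_congr rfl fun j _ => ?_
    cases v j <;> simp [PMF.bernoulli_apply, ofReal_sub]
  · simp [hv]

end

lemma bernoulliWeight_cons {m : ℕ} (r : Fin (m + 1) → ℝ) (b : Bool) (u : Fin m → Bool) :
    bernoulliWeight r (Fin.cons b u) =
      (if b then r 0 else 1 - r 0) * bernoulliWeight (Fin.tail r) u := by
  simp [bernoulliWeight, Fin.prod_univ_succ, Fin.tail]

lemma sum_indicator_bernoulliWeight_mono {m : ℕ} {S : Set (Fin m → Bool)} (hS : IsUpperSet S)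
    {r s : Fin m → ℝ} (hs0 : 0 ≤ s) (hsr : s ≤ r) (hr1 : r ≤ 1) :
    ∑ v, S.indicator (bernoulliWeight s) v ≤ ∑ v, S.indicator (bernoulliWeight r) v := by
  induction m with
  | zero => rw [Subsingleton.elim s r]
  | succ m ih =>
    set slice : Bool → Set (Fin m → Bool) := fun b => Fin.cons (α := fun _ => Bool) b ⁻¹' S
    have hcons (x : Fin (m + 1) → ℝ) (b : Bool) (u : Fin m → Bool) :
        S.indicator (bernoulliWeight x) (Fin.cons b u) =
          (if b then x 0 else 1 - x 0) * (slice b).indicator (bernoulliWeight (Fin.tail x)) u := by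
      by_cases hu : u ∈ slice b
      · rw [Set.indicator_of_mem (s := S) hu, Set.indicator_of_mem hu, bernoulliWeight_cons]
      · rw [Set.indicator_of_notMem (s := S) hu, Set.indicator_of_notMem hu, mul_zero]
    have hsum (x : Fin (m + 1) → ℝ) : ∑ v, S.indicator (bernoulliWeight x) v =
        x 0 * ∑ u, (slice true).indicator (bernoulliWeight (Fin.tail x)) u +
          (1 - x 0) * ∑ u, (slice false).indicator (bernoulliWeight (Fin.tail x)) u := by
      rw [← (Fin.consEquiv fun _ => Bool).sum_comp, Fintype.sum_prod_type, Fintype.sum_bool,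
        mul_sum, mul_sum]
      simp only [Fin.consEquiv, Equiv.coe_fn_mk, hcons, if_true, Bool.false_eq_true, if_false]
    have hslice (b : Bool) : IsUpperSet (slice b) :=
      hS.preimage fun _ _ h => Fin.cons_le_cons.2 ⟨le_rfl, h⟩
    have hsub : slice false ⊆ slice true :=
      fun u hu => hS (Fin.cons_le_cons.2 ⟨Bool.false_le _, le_rfl⟩) hu
    have htail (b : Bool) := ih (hslice b) (r := Fin.tail r) (s := Fin.tail s)
      (fun j : Fin m => hs0 j.succ) (fun j : Fin m => hsr j.succ) (fun j : Fin m => hr1 j.succ)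
    have hsub_r : ∑ u, (slice false).indicator (bernoulliWeight (Fin.tail r)) u ≤
        ∑ u, (slice true).indicator (bernoulliWeight (Fin.tail r)) u :=
      sum_le_sum fun u _ => Set.indicator_le_indicator_of_subset hsub
        (fun _ => bernoulliWeight_nonneg (r := Fin.tail r)
          (fun j => (hs0 j.succ).trans (hsr j.succ)) (fun j => hr1 j.succ) _) u
    have hs00 : 0 ≤ s 0 := hs0 0
    have hr01 : r 0 ≤ 1 := hr1 0
    rw [hsum s, hsum r]
    nlinarith [mul_le_mul_of_nonneg_left (htail true) hs00,
      mul_le_mul_of_nonneg_left (htail false) (sub_nonneg.2 ((hsr 0).trans hr01)),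
      mul_nonneg (sub_nonneg.2 (hsr 0)) (sub_nonneg.2 hsub_r)]

/-- Change-of-measure inequality for weighted sums of independent Bernoulli
random variables: if `p_j ≥ q_j + q_j(1-q_j) ω β_j` for all `j`, then
`P(Σ β_j Z_j(p_j) > A) ≥ exp(ωA - ω Σ β_j q_j - 2ω² Σ β_j²) P(Σ β_j Z_j(q_j) > A)`. -/
theorem bernoulli_change_of_measure (m : ℕ)
    (p q : Fin m → ℝ≥0) (hp : ∀ j, (p j : ℝ≥0∞) ≤ 1) (hq : ∀ j, (q j : ℝ≥0∞) ≤ 1)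
    (β : Fin m → ℝ) (hβ : ∀ j, 0 ≤ β j)
    (ω : ℝ) (hω0 : 0 ≤ ω)
    (hpq : ∀ j, (q j : ℝ) + (q j : ℝ) * (1 - (q j : ℝ)) * ω * β j ≤ (p j : ℝ))
    (A : ℝ) :
    ENNReal.ofReal (Real.exp (ω * A - ω * ∑ j, β j * (q j : ℝ) - 2 * ω ^ 2 * ∑ j, (β j) ^ 2)) *
        (Measure.pi fun j => (PMF.bernoulli (q j) (by exact_mod_cast hq j)).toMeasure)
          {ω' : Fin m → Bool | A < ∑ j, β j * (if ω' j then 1 else 0)} ≤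
      (Measure.pi fun j => (PMF.bernoulli (p j) (by exact_mod_cast hp j)).toMeasure)
        {ω' : Fin m → Bool | A < ∑ j, β j * (if ω' j then 1 else 0)} := by
  have hq1 : (fun j => (q j : ℝ)) ≤ 1 := fun j => by exact_mod_cast hq j
  have hp1 : (fun j => (p j : ℝ)) ≤ 1 := fun j => by exact_mod_cast hp j
  have hS : IsUpperSet {v : Fin m → Bool | A < ∑ j, β j * (if v j then 1 else 0)} :=
    fun v w hvw hv => hv.trans_le <| sum_le_sum fun j _ => mul_le_mul_of_nonneg_left
      (by have := hvw j; revert this; cases v j <;> cases w j <;> simp) (hβ j)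
  have htilt : (fun j => tiltedProb (q j) (ω * β j)) ≤ fun j => (p j : ℝ) := fun j =>
    (tiltedProb_le (q j).2 (hq1 j)).trans (by rw [← mul_assoc]; exact hpq j)
  rw [measure_pi_bernoulli_eq q, measure_pi_bernoulli_eq p, ← ofReal_mul (Real.exp_pos _).le,
    mul_sum]
  refine ofReal_le_ofReal ((sum_le_sum fun v _ => ?_).trans
    (sum_indicator_bernoulliWeight_mono hS
      (fun j => tiltedProb_nonneg (q j).2 (hq1 j) (mul_nonneg hω0 (hβ j))) htilt hp1))
  rw [← Set.indicator_const_mul]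
  exact Set.indicator_le_indicator' fun hv =>
    exp_mul_bernoulliWeight_le_of_lt_sum (fun j => (q j).2) hq1 hβ hω0 hv
end

section
/- Let m ≥ 3 and let ε_1, ..., ε_m be independent real random variables satisfying E[|ε_i|^r] ≤ A^r r^r for all i and all integers r ≥ 2, where A > 0. Let ω_1, ..., ω_m > 0 be weights, p ≥ 1 an integer, and t > 0. Then P( Σ_{i=1}^m ω_i (ε_i^p − E[ε_i^p]) ≥ 2e(2Ap)^p max(‖ω‖₂, ‖ω‖_∞ t^p) t ) ≤ m e^{2−t}. -/
/-!
Rosenthal's inequality for independent centered `ξ i` and even `q`: if `∑ E[ξ i ^ 2] ≤ L ^ 2` and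
`∑ E[ξ i ^ q] ≤ L ^ q`, then `E[(∑ ξ i) ^ q] ≤ (2 q L) ^ q`. By scaling take `L = 1`. Expanding
`(∑ ξ i) ^ q` by the multinomial theorem and using independence, every multi-index containing a
`1` contributes zero because the `ξ i` are centered, and each remaining moment `|E[ξ i ^ k]|`,
`2 ≤ k ≤ q`, is at most `c i = E[ξ i ^ 2] + E[ξ i ^ q]`. A multi-index without `1`s has at most
`q / 2` nonzero entries, so grouping by support bounds the sum by
`(q / 2) ^ q ∏ (1 + c i) ≤ (q / 2) ^ q e ^ 2 ≤ (2 q) ^ q`.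

Apply this to `ξ i = w i * (ε i ^ p - E[ε i ^ p])` with `q` the largest even integer below `t`
(for `t ≤ 2` the bound exceeds `1`). The moment hypothesis makes
`L = m ^ (1/q) (2 A p) ^ p max(‖w‖₂, ‖w‖_∞ t ^ p) t / q` admissible, and Markov's inequality for
the `q`-th power gives the tail `m e ^ (-q) ≤ m e ^ (2 - t)`.
-/

open MeasureTheory ProbabilityTheory NNReal ENNReal

section Moments

open Finset

variable {Ω : Type*} [MeasurableSpace Ω] {μ : Measure Ω}

lemma integrable_pow_of_le [IsFiniteMeasure μ] {X : Ω → ℝ} (hX : AEStronglyMeasurable X μ)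
    {k q : ℕ} (hkq : k ≤ q) (hint : Integrable (fun ω => |X ω| ^ q) μ) :
    Integrable (fun ω => X ω ^ k) μ := by
  refine (integrable_norm_iff (hX.pow k)).mp ?_
  simpa only [Pi.pow_apply, norm_pow, Real.norm_eq_abs] using
    integrable_norm_pow_of_le hX hkq (by simpa only [Real.norm_eq_abs] using hint)

lemma ProbabilityTheory.iIndepFun.integrable_finset_prod {ι : Type*} {ξ : ι → Ω → ℝ}
    (hmeas : ∀ i, Measurable (ξ i)) (hind : iIndepFun ξ μ) (hint : ∀ i, Integrable (ξ i) μ)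
    (s : Finset ι) : Integrable (fun ω => ∏ i ∈ s, ξ i ω) μ := by
  classical
  induction s using Finset.induction_on with
  | empty => have := hind.isProbabilityMeasure; simp
  | insert a s has ih =>
    simp_rw [prod_insert has]
    have := (hind.indepFun_finsetProd_of_notMem hmeas has).symm.integrable_mul (hint a)
      (by simpa only [← Finset.prod_apply] using ih)
    exact this.congr (ae_of_all _ fun ω => by simp)

lemma measure_ge_le_ofReal_integral_pow_div [IsFiniteMeasure μ] {S : Ω → ℝ} {q : ℕ}
    (hq : Even q) {M : ℝ} (hM : 0 < M) (hint : Integrable (fun ω => S ω ^ q) μ) :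
    μ {ω | M ≤ S ω} ≤ ENNReal.ofReal ((∫ ω, S ω ^ q ∂μ) / M ^ q) :=
  calc μ {ω | M ≤ S ω} ≤ μ {ω | M ^ q ≤ S ω ^ q} :=
        measure_mono fun _ h => pow_le_pow_left₀ hM.le h q
    _ = ENNReal.ofReal (μ.real {ω | M ^ q ≤ S ω ^ q}) :=
        (ofReal_measureReal (measure_ne_top _ _)).symm
    _ ≤ ENNReal.ofReal ((∫ ω, S ω ^ q ∂μ) / M ^ q) := ENNReal.ofReal_le_ofReal <|
        (le_div_iff₀' (pow_pos hM q)).2 <|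
          mul_meas_ge_le_integral_of_nonneg (ae_of_all _ fun _ => hq.pow_nonneg _) hint _

lemma abs_pow_le_sq_add_pow {x : ℝ} {k q : ℕ} (hq : Even q) (hk : 2 ≤ k) (hkq : k ≤ q) :
    |x| ^ k ≤ x ^ 2 + x ^ q := by
  rcases le_total |x| 1 with hx | hx
  · have := pow_le_pow_of_le_one (abs_nonneg x) hx hk
    rw [sq_abs] at this
    linarith [hq.pow_nonneg x]
  · have := pow_le_pow_right₀ hx hkq
    rw [hq.pow_abs] at this
    linarith [sq_nonneg x]

lemma abs_integral_pow_le_integral_sq_add_integral_pow [IsFiniteMeasure μ] {X : Ω → ℝ}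
    (hX : AEStronglyMeasurable X μ) {k q : ℕ} (hq : Even q) (hk : 2 ≤ k) (hkq : k ≤ q)
    (hint : Integrable (fun ω => X ω ^ q) μ) :
    |∫ ω, X ω ^ k ∂μ| ≤ ∫ ω, X ω ^ 2 ∂μ + ∫ ω, X ω ^ q ∂μ := by
  have hint_le : ∀ j ≤ q, Integrable (fun ω => X ω ^ j) μ := fun j hj =>
    integrable_pow_of_le hX hj (by simpa only [hq.pow_abs] using hint)
  calc |∫ ω, X ω ^ k ∂μ| ≤ ∫ ω, |X ω| ^ k ∂μ := by
        simpa only [abs_pow] using abs_integral_le_integral_abs (f := fun ω => X ω ^ k)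
    _ ≤ ∫ ω, (X ω ^ 2 + X ω ^ q) ∂μ :=
        integral_mono (by simpa only [abs_pow] using (hint_le k hkq).abs)
          ((hint_le 2 (hk.trans hkq)).add hint) fun ω => abs_pow_le_sq_add_pow hq hk hkq
    _ = ∫ ω, X ω ^ 2 ∂μ + ∫ ω, X ω ^ q ∂μ := integral_add (hint_le 2 (hk.trans hkq)) hint

variable [IsProbabilityMeasure μ] {X : Ω → ℝ}

lemma pow_integral_le_integral_pow {q : ℕ} (hq : Even q) (hX : Integrable X μ)
    (hXq : Integrable (fun ω => X ω ^ q) μ) : (∫ ω, X ω ∂μ) ^ q ≤ ∫ ω, X ω ^ q ∂μ :=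
  hq.convexOn_pow.map_integral_le (continuous_pow q).continuousOn isClosed_univ
    (ae_of_all _ fun _ => Set.mem_univ _) hX hXq

lemma integral_sub_integral_pow_le {q : ℕ} (hq : Even q) (hX : Integrable X μ)
    (hXq : Integrable (fun ω => X ω ^ q) μ) :
    ∫ ω, (X ω - ∫ ω', X ω' ∂μ) ^ q ∂μ ≤ 2 ^ q * ∫ ω, X ω ^ q ∂μ := by
  obtain rfl | hq1 := Nat.eq_zero_or_pos q
  · simp
  set c := ∫ ω', X ω' ∂μ
  calc ∫ ω, (X ω - c) ^ q ∂μ ≤ ∫ ω, 2 ^ (q - 1) * (X ω ^ q + c ^ q) ∂μ := by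
        refine integral_mono_of_nonneg (ae_of_all _ fun ω => hq.pow_nonneg _)
          ((hXq.add (integrable_const _)).const_mul _) (ae_of_all _ fun ω => ?_)
        simpa only [sub_eq_add_neg, hq.neg_pow] using hq.add_pow_le (a := X ω) (b := -c)
    _ = 2 ^ (q - 1) * (∫ ω, X ω ^ q ∂μ + c ^ q) := by
        rw [integral_const_mul, integral_add hXq (integrable_const _), integral_const,
          probReal_univ, one_smul]
    _ ≤ 2 ^ (q - 1) * (2 * ∫ ω, X ω ^ q ∂μ) := by
        gcongr
        linarith [pow_integral_le_integral_pow hq hX hXq]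
    _ = 2 ^ q * ∫ ω, X ω ^ q ∂μ := by
        rw [← mul_assoc, ← pow_succ, Nat.sub_add_cancel hq1]

end Moments

lemma prod_one_add_le_four_pow {ι : Type*} [Fintype ι] {c : ι → ℝ} (hc : ∀ i, 0 ≤ c i)
    (hsum : ∑ i, c i ≤ 2) {q : ℕ} (hq : 2 ≤ q) : ∏ i, (1 + c i) ≤ 4 ^ q :=
  calc ∏ i, (1 + c i) ≤ ∏ i, Real.exp (c i) :=
        Finset.prod_le_prod (fun i _ => by linarith [hc i]) fun i _ => by
          linarith [Real.add_one_le_exp (c i)]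
    _ = Real.exp (∑ i, c i) := (Real.exp_sum _ _).symm
    _ ≤ Real.exp 1 ^ 2 := by rw [← Real.exp_nat_mul]; exact Real.exp_le_exp.2 (by simpa)
    _ ≤ 4 ^ 2 := by gcongr; linarith [Real.exp_one_lt_d9]
    _ ≤ 4 ^ q := pow_le_pow_right₀ (by norm_num) hq

section Multinomial

open Finset

variable {ι : Type*} [DecidableEq ι]

lemma le_of_mem_piAntidiag {s : Finset ι} {q : ℕ} {k : ι → ℕ} (hk : k ∈ piAntidiag s q)
    (i : ι) : k i ≤ q := by
  rw [mem_piAntidiag] at hk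
  by_cases hi : i ∈ s
  · exact hk.1 ▸ single_le_sum (fun j _ => Nat.zero_le (k j)) hi
  · simp [not_imp_comm.1 (hk.2 i) hi]

variable [Fintype ι]

lemma sum_multinomial_filter_support_eq_le (q : ℕ) (I : Finset ι) :
    ∑ k ∈ piAntidiag univ q with (∀ i, k i ≠ 1) ∧ univ.filter (k · ≠ 0) = I,
      (Nat.multinomial univ k : ℝ) ≤ ((q : ℝ) / 2) ^ q := by
  set fiber := {k ∈ piAntidiag (univ : Finset ι) q | (∀ i, k i ≠ 1) ∧ univ.filter (k · ≠ 0) = I}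
  have hsupp : ∀ k ∈ fiber, ∀ i, i ∉ I → k i = 0 := by
    intro k hk i hi
    by_contra h
    exact hi ((mem_filter.1 hk).2.2 ▸ mem_filter.2 ⟨mem_univ i, h⟩)
  have hsum : ∀ k ∈ fiber, ∑ i ∈ I, k i = q := by
    intro k hk
    rw [← (mem_piAntidiag.1 (mem_filter.1 hk).1).1]
    exact sum_subset (subset_univ I) fun i _ hi => hsupp k hk i hi
  rcases fiber.eq_empty_or_nonempty with hempty | ⟨k₀, hk₀⟩
  · rw [hempty, sum_empty]
    positivity
  have hcard : 2 * #I ≤ q := by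
    rw [← hsum k₀ hk₀, mul_comm, ← smul_eq_mul, ← sum_const]
    refine sum_le_sum fun i hi => ?_
    have hne : k₀ i ≠ 0 := by
      rw [← (mem_filter.1 hk₀).2.2] at hi
      exact (mem_filter.1 hi).2
    have := (mem_filter.1 hk₀).2.1 i
    omega
  calc ∑ k ∈ fiber, (Nat.multinomial univ k : ℝ)
      = ∑ k ∈ fiber, (Nat.multinomial I k : ℝ) := by
        refine sum_congr rfl fun k hk => ?_
        rw [Nat.multinomial_congr_of_sdiff (subset_univ I)
          (fun i hi => hsupp k hk i (mem_sdiff.1 hi).2) fun _ _ => rfl]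
    _ ≤ ∑ k ∈ piAntidiag I q, (Nat.multinomial I k : ℝ) := by
        refine sum_le_sum_of_subset_of_nonneg (fun k hk => mem_piAntidiag.2 ⟨hsum k hk, ?_⟩)
          fun _ _ _ => Nat.cast_nonneg _
        intro i hi
        by_contra h
        exact hi (hsupp k hk i h)
    _ = (#I : ℝ) ^ q := by
        simpa using (sum_pow_eq_sum_piAntidiag I (fun _ => (1 : ℝ)) q).symm
    _ ≤ ((q : ℝ) / 2) ^ q := by
        gcongr
        rw [le_div_iff₀ two_pos]
        exact_mod_cast (by omega : #I * 2 ≤ q)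

lemma sum_multinomial_mul_prod_support_le (q : ℕ) {c : ι → ℝ} (hc : ∀ i, 0 ≤ c i) :
    ∑ k ∈ piAntidiag univ q with ∀ i, k i ≠ 1,
      (Nat.multinomial univ k : ℝ) * ∏ i ∈ univ.filter (k · ≠ 0), c i ≤
      ((q : ℝ) / 2) ^ q * ∏ i, (1 + c i) := by
  rw [prod_one_add, powerset_univ, mul_sum, ← sum_fiberwise _ (fun k => univ.filter (k · ≠ 0))]
  refine sum_le_sum fun I _ => ?_
  rw [filter_filter]
  calc ∑ k ∈ piAntidiag univ q with (∀ i, k i ≠ 1) ∧ univ.filter (k · ≠ 0) = I,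
        (Nat.multinomial univ k : ℝ) * ∏ i ∈ univ.filter (k · ≠ 0), c i
      = (∑ k ∈ piAntidiag univ q with (∀ i, k i ≠ 1) ∧ univ.filter (k · ≠ 0) = I,
        (Nat.multinomial univ k : ℝ)) * ∏ i ∈ I, c i := by
        rw [sum_mul]
        exact sum_congr rfl fun k hk => by rw [(mem_filter.1 hk).2.2]
    _ ≤ ((q : ℝ) / 2) ^ q * ∏ i ∈ I, c i :=
        mul_le_mul_of_nonneg_right (sum_multinomial_filter_support_eq_le q I)
          (prod_nonneg fun i _ => hc i)

end Multinomial

namespace ProbabilityTheory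

open Finset

variable {Ω : Type*} [MeasurableSpace Ω] {μ : Measure Ω} {ι : Type*} [Fintype ι]
  {ξ : ι → Ω → ℝ}

lemma iIndepFun.integrable_prod_pow [DecidableEq ι] (hmeas : ∀ i, Measurable (ξ i))
    (hind : iIndepFun ξ μ) {q : ℕ} (hint : ∀ i, Integrable (fun ω => |ξ i ω| ^ q) μ) {k : ι → ℕ}
    (hk : k ∈ piAntidiag univ q) : Integrable (fun ω => ∏ i, ξ i ω ^ k i) μ := by
  have := hind.isProbabilityMeasure
  exact (hind.comp (fun i x => x ^ k i) fun i => measurable_id.pow_const _).integrable_finset_prod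
    (fun i => (hmeas i).pow_const _)
    (fun i => integrable_pow_of_le (hmeas i).aestronglyMeasurable (le_of_mem_piAntidiag hk i)
      (hint i)) univ

lemma iIndepFun.integrable_sum_pow (hmeas : ∀ i, Measurable (ξ i)) (hind : iIndepFun ξ μ)
    {q : ℕ} (hint : ∀ i, Integrable (fun ω => |ξ i ω| ^ q) μ) :
    Integrable (fun ω => (∑ i, ξ i ω) ^ q) μ := by
  classical
  simp_rw [sum_pow_eq_sum_piAntidiag]
  exact integrable_finsetSum _ fun k hk => (hind.integrable_prod_pow hmeas hint hk).const_mul _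

lemma iIndepFun.integral_sum_pow [DecidableEq ι] (hmeas : ∀ i, Measurable (ξ i))
    (hind : iIndepFun ξ μ) {q : ℕ} (hint : ∀ i, Integrable (fun ω => |ξ i ω| ^ q) μ) :
    ∫ ω, (∑ i, ξ i ω) ^ q ∂μ =
      ∑ k ∈ piAntidiag univ q, (Nat.multinomial univ k : ℝ) * ∏ i, ∫ ω, ξ i ω ^ k i ∂μ := by
  simp_rw [sum_pow_eq_sum_piAntidiag]
  rw [integral_finsetSum _ fun k hk => (hind.integrable_prod_pow hmeas hint hk).const_mul _]
  refine sum_congr rfl fun k _ => ?_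
  rw [integral_const_mul]
  exact congrArg _ ((hind.comp (fun i x => x ^ k i) fun i =>
    measurable_id.pow_const _).integral_fun_prod_eq_prod_integral
      fun i => ((hmeas i).pow_const _).aestronglyMeasurable)

lemma prod_integral_pow_le_prod_filter_ne_zero [IsProbabilityMeasure μ]
    (hmeas : ∀ i, AEStronglyMeasurable (ξ i) μ) {q : ℕ} (hq : Even q)
    (hint : ∀ i, Integrable (fun ω => ξ i ω ^ q) μ) {k : ι → ℕ} (hk : ∀ i, k i ≤ q)
    (hk1 : ∀ i, k i ≠ 1) :
    ∏ i, ∫ ω, ξ i ω ^ k i ∂μ ≤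
      ∏ i ∈ univ.filter (k · ≠ 0), (∫ ω, ξ i ω ^ 2 ∂μ + ∫ ω, ξ i ω ^ q ∂μ) := by
  rw [← prod_filter_of_ne (p := (k · ≠ 0)) fun i _ hi h0 => hi (by simp [h0])]
  refine (le_abs_self _).trans ((abs_prod _ _).trans_le (prod_le_prod (fun _ _ => abs_nonneg _)
    fun i hi => ?_))
  exact abs_integral_pow_le_integral_sq_add_integral_pow (hmeas i) hq
    (by have := hk1 i; have := (mem_filter.1 hi).2; omega) (hk i) (hint i)

lemma iIndepFun.integral_sum_pow_le_of_sum_moments_le_one (hmeas : ∀ i, Measurable (ξ i))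
    (hind : iIndepFun ξ μ) (hcent : ∀ i, ∫ ω, ξ i ω ∂μ = 0) {q : ℕ} (hq : Even q) (hq2 : 2 ≤ q)
    (hint : ∀ i, Integrable (fun ω => ξ i ω ^ q) μ)
    (hsum_sq : ∑ i, ∫ ω, ξ i ω ^ 2 ∂μ ≤ 1) (hsum_pow : ∑ i, ∫ ω, ξ i ω ^ q ∂μ ≤ 1) :
    ∫ ω, (∑ i, ξ i ω) ^ q ∂μ ≤ (2 * q : ℝ) ^ q := by
  classical
  have := hind.isProbabilityMeasure
  set c : ι → ℝ := fun i => ∫ ω, ξ i ω ^ 2 ∂μ + ∫ ω, ξ i ω ^ q ∂μ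
  have hc : ∀ i, 0 ≤ c i := fun i => add_nonneg (integral_nonneg fun ω => sq_nonneg _)
    (integral_nonneg fun ω => hq.pow_nonneg _)
  have hvanish : ∀ k ∈ piAntidiag univ q,
      (Nat.multinomial univ k : ℝ) * ∏ i, ∫ ω, ξ i ω ^ k i ∂μ ≠ 0 → ∀ i, k i ≠ 1 :=
    fun k _ hk i hi => hk <| by
      rw [prod_eq_zero (mem_univ i) (by simp only [hi, pow_one, hcent]), mul_zero]
  rw [hind.integral_sum_pow hmeas (fun i => by simpa only [hq.pow_abs] using hint i),
    ← sum_filter_of_ne hvanish]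
  calc ∑ k ∈ piAntidiag univ q with ∀ i, k i ≠ 1,
        (Nat.multinomial univ k : ℝ) * ∏ i, ∫ ω, ξ i ω ^ k i ∂μ
      ≤ ∑ k ∈ piAntidiag univ q with ∀ i, k i ≠ 1,
        (Nat.multinomial univ k : ℝ) * ∏ i ∈ univ.filter (k · ≠ 0), c i := by
        refine sum_le_sum fun k hk => mul_le_mul_of_nonneg_left ?_ (Nat.cast_nonneg _)
        exact prod_integral_pow_le_prod_filter_ne_zero (fun i => (hmeas i).aestronglyMeasurable)
          hq hint (le_of_mem_piAntidiag (mem_filter.1 hk).1) (mem_filter.1 hk).2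
    _ ≤ ((q : ℝ) / 2) ^ q * ∏ i, (1 + c i) := sum_multinomial_mul_prod_support_le q hc
    _ ≤ ((q : ℝ) / 2) ^ q * 4 ^ q := by
        gcongr
        exact prod_one_add_le_four_pow hc (by simp only [c, sum_add_distrib]; linarith) hq2
    _ = (2 * q : ℝ) ^ q := by rw [← mul_pow]; ring_nf

theorem iIndepFun.integral_sum_pow_le (hmeas : ∀ i, Measurable (ξ i))
    (hind : iIndepFun ξ μ) (hcent : ∀ i, ∫ ω, ξ i ω ∂μ = 0) {q : ℕ} (hq : Even q) (hq2 : 2 ≤ q)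
    (hint : ∀ i, Integrable (fun ω => ξ i ω ^ q) μ) {L : ℝ} (hL : 0 < L)
    (hsum_sq : ∑ i, ∫ ω, ξ i ω ^ 2 ∂μ ≤ L ^ 2) (hsum_pow : ∑ i, ∫ ω, ξ i ω ^ q ∂μ ≤ L ^ q) :
    ∫ ω, (∑ i, ξ i ω) ^ q ∂μ ≤ (2 * q * L) ^ q := by
  have hscale : ∀ n : ℕ, ∀ f : Ω → ℝ, ∫ ω, (f ω / L) ^ n ∂μ = (∫ ω, f ω ^ n ∂μ) / L ^ n :=
    fun n f => by simp_rw [div_pow, integral_div]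
  have key := iIndepFun.integral_sum_pow_le_of_sum_moments_le_one (ξ := fun i ω => ξ i ω / L)
    (fun i => (hmeas i).div_const L)
    (hind.comp (fun _ x => x / L) fun _ => measurable_id.div_const L)
    (fun i => by rw [integral_div, hcent, zero_div])
    hq hq2 (fun i => by simpa only [div_pow] using (hint i).div_const (L ^ q))
    (by simpa only [hscale, ← sum_div] using div_le_one_of_le₀ hsum_sq (by positivity))
    (by simpa only [hscale, ← sum_div] using div_le_one_of_le₀ hsum_pow (by positivity))
  simp_rw [← sum_div] at key
  rw [hscale, div_le_iff₀ (by positivity)] at key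
  rwa [mul_pow]

end ProbabilityTheory

section Application

open Finset

variable {Ω : Type*} [MeasurableSpace Ω] {μ : Measure Ω} [IsProbabilityMeasure μ]

lemma integrable_pow_of_forall_two_le {X : Ω → ℝ} (hX : AEStronglyMeasurable X μ)
    (hint : ∀ r : ℕ, 2 ≤ r → Integrable (fun ω => |X ω| ^ r) μ) (k : ℕ) :
    Integrable (fun ω => X ω ^ k) μ :=
  integrable_pow_of_le hX (le_max_left k 2) (hint _ (le_max_right k 2))

lemma integral_pow_sub_integral_sq_le {X : Ω → ℝ} (hX : AEStronglyMeasurable X μ) {A : ℝ}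
    (hmom : ∀ r : ℕ, 2 ≤ r → ∫ ω, |X ω| ^ r ∂μ ≤ A ^ r * (r : ℝ) ^ r) {p : ℕ} (hp : 1 ≤ p) :
    ∫ ω, (X ω ^ p - ∫ ω', X ω' ^ p ∂μ) ^ 2 ∂μ ≤ ((2 * A * p) ^ p) ^ 2 := by
  have hXp : AEStronglyMeasurable (fun ω => X ω ^ p) μ := hX.pow p
  calc ∫ ω, (X ω ^ p - ∫ ω', X ω' ^ p ∂μ) ^ 2 ∂μ ≤ ∫ ω, (X ω ^ p) ^ 2 ∂μ :=
        (variance_eq_integral hXp.aemeasurable).symm.trans_le (variance_le_expectation_sq hXp)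
    _ = ∫ ω, |X ω| ^ (2 * p) ∂μ := by
        simp_rw [← pow_mul, mul_comm p 2, (even_two_mul p).pow_abs]
    _ ≤ ((2 * A * p) ^ p) ^ 2 := by
        refine (hmom _ (by omega)).trans_eq ?_
        push_cast
        ring

lemma integral_pow_sub_integral_pow_le {X : Ω → ℝ} (hX : AEStronglyMeasurable X μ) {A : ℝ}
    (hint : ∀ r : ℕ, 2 ≤ r → Integrable (fun ω => |X ω| ^ r) μ)
    (hmom : ∀ r : ℕ, 2 ≤ r → ∫ ω, |X ω| ^ r ∂μ ≤ A ^ r * (r : ℝ) ^ r) {p q : ℕ} (hq : Even q)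
    (hpq : 2 ≤ p * q) :
    ∫ ω, (X ω ^ p - ∫ ω', X ω' ^ p ∂μ) ^ q ∂μ ≤ (2 * (A * (p * q)) ^ p) ^ q := by
  have hpow : (fun ω => (X ω ^ p) ^ q) = fun ω => |X ω| ^ (p * q) := by
    simp_rw [← pow_mul, (hq.mul_left p).pow_abs]
  calc ∫ ω, (X ω ^ p - ∫ ω', X ω' ^ p ∂μ) ^ q ∂μ ≤ 2 ^ q * ∫ ω, (X ω ^ p) ^ q ∂μ :=
        integral_sub_integral_pow_le hq (integrable_pow_of_forall_two_le hX hint p)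
          (hpow ▸ hint _ hpq)
    _ ≤ (2 * (A * (p * q)) ^ p) ^ q := by
        rw [hpow, mul_pow, ← pow_mul]
        gcongr
        refine (hmom _ hpq).trans_eq ?_
        push_cast
        ring

variable {ι : Type*} [Fintype ι] {w : ι → ℝ}

lemma sum_sq_mul_sq_le_sq {C L : ℝ} (hC : 0 ≤ C) (h : C * √(∑ i, w i ^ 2) ≤ L) :
    ∑ i, w i ^ 2 * C ^ 2 ≤ L ^ 2 := by
  rw [← sum_mul, ← Real.sq_sqrt (sum_nonneg fun i _ => sq_nonneg (w i)), ← mul_pow, mul_comm]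
  gcongr

lemma sum_pow_mul_pow_le_pow (hw : ∀ i, 0 ≤ w i) {C L : ℝ} (hC : 0 ≤ C) {q : ℕ}
    (h : Fintype.card ι * (C * ⨆ i, w i) ^ q ≤ L ^ q) : ∑ i, w i ^ q * C ^ q ≤ L ^ q := by
  refine le_trans ?_ h
  rw [← sum_mul, mul_pow, mul_comm (C ^ q), ← mul_assoc, ← nsmul_eq_mul, ← card_univ,
    ← sum_const]
  exact mul_le_mul_of_nonneg_right (sum_le_sum fun i _ => pow_le_pow_left₀ (hw i)
    (le_ciSup (Finite.bddAbove_range w) i) q) (pow_nonneg hC q)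

theorem ProbabilityTheory.iIndepFun.integrable_and_integral_weighted_sum_pow_le
    {ε : ι → Ω → ℝ} (hmeas : ∀ i, Measurable (ε i)) (hind : iIndepFun ε μ) {A : ℝ} (hA : 0 ≤ A)
    (hint : ∀ i, ∀ r : ℕ, 2 ≤ r → Integrable (fun ω => |ε i ω| ^ r) μ)
    (hmom : ∀ i, ∀ r : ℕ, 2 ≤ r → ∫ ω, |ε i ω| ^ r ∂μ ≤ A ^ r * (r : ℝ) ^ r)
    (hw : ∀ i, 0 ≤ w i) {p q : ℕ} (hp : 1 ≤ p) (hq : Even q) (hq2 : 2 ≤ q) {L : ℝ} (hL : 0 < L)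
    (hL_two : (2 * A * p) ^ p * √(∑ i, w i ^ 2) ≤ L)
    (hL_sup : Fintype.card ι * (2 * (A * (p * q)) ^ p * ⨆ i, w i) ^ q ≤ L ^ q) :
    Integrable (fun ω => (∑ i, w i * (ε i ω ^ p - ∫ ω', ε i ω' ^ p ∂μ)) ^ q) μ ∧
      ∫ ω, (∑ i, w i * (ε i ω ^ p - ∫ ω', ε i ω' ^ p ∂μ)) ^ q ∂μ ≤ (2 * q * L) ^ q := by
  set ξ : ι → Ω → ℝ := fun i ω => w i * (ε i ω ^ p - ∫ ω', ε i ω' ^ p ∂μ)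
  have hmeas_ξ : ∀ i, Measurable (ξ i) := fun i =>
    (((hmeas i).pow_const p).sub_const _).const_mul (w i)
  have hind_ξ : iIndepFun ξ μ := hind.comp (fun i x => w i * (x ^ p - ∫ ω', ε i ω' ^ p ∂μ))
    fun i => ((measurable_id.pow_const p).sub_const _).const_mul (w i)
  have hint_pow : ∀ i k, Integrable (fun ω => ε i ω ^ k) μ := fun i =>
    integrable_pow_of_forall_two_le (hmeas i).aestronglyMeasurable (hint i)
  have hξ_pow : ∀ i k, ∫ ω, ξ i ω ^ k ∂μ =
      w i ^ k * ∫ ω, (ε i ω ^ p - ∫ ω', ε i ω' ^ p ∂μ) ^ k ∂μ :=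
    fun i k => by simp_rw [ξ, mul_pow, integral_const_mul]
  have hint_ξ : ∀ i, Integrable (fun ω => ξ i ω ^ q) μ := fun i => by
    simp_rw [ξ, mul_pow, sub_eq_add_neg, add_pow, ← pow_mul]
    exact (integrable_finsetSum _ fun j _ =>
      ((hint_pow i _).mul_const _).mul_const _).const_mul _
  have hcent_ξ : ∀ i, ∫ ω, ξ i ω ∂μ = 0 := fun i => by
    simpa only [pow_one, integral_sub (hint_pow i p) (integrable_const _), integral_const,
      probReal_univ, one_smul, sub_self, mul_zero] using hξ_pow i 1
  have hsum_sq : ∑ i, ∫ ω, ξ i ω ^ 2 ∂μ ≤ L ^ 2 := by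
    refine (sum_le_sum fun i _ => ?_).trans (sum_sq_mul_sq_le_sq (by positivity) hL_two)
    rw [hξ_pow]
    exact mul_le_mul_of_nonneg_left (integral_pow_sub_integral_sq_le
      (hmeas i).aestronglyMeasurable (hmom i) hp) (sq_nonneg _)
  have hsum_pow : ∑ i, ∫ ω, ξ i ω ^ q ∂μ ≤ L ^ q := by
    refine (sum_le_sum fun i _ => ?_).trans (sum_pow_mul_pow_le_pow hw (by positivity) hL_sup)
    rw [hξ_pow]
    exact mul_le_mul_of_nonneg_left (integral_pow_sub_integral_pow_le
      (hmeas i).aestronglyMeasurable (hint i) (hmom i) hq (by nlinarith)) (hq.pow_nonneg _)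
  exact ⟨hind_ξ.integrable_sum_pow hmeas_ξ fun i => by simpa only [hq.pow_abs] using hint_ξ i,
    hind_ξ.integral_sum_pow_le hmeas_ξ hcent_ξ hq hq2 hint_ξ hL hsum_sq hsum_pow⟩

end Application

lemma two_mul_mul_pow_mul_le {A W K t : ℝ} {p q : ℕ} (hA : 0 ≤ A) (hW : 0 ≤ W) (hp : 1 ≤ p)
    (hqt : (q : ℝ) ≤ t) (hK : W * t ^ p ≤ K) :
    2 * (A * (p * q)) ^ p * W * q ≤ (2 * A * p) ^ p * K * t := by
  have h2p : (2 : ℝ) ≤ 2 ^ p := by simpa using pow_le_pow_right₀ one_le_two hp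
  have ht : 0 ≤ t := (Nat.cast_nonneg q).trans hqt
  calc 2 * (A * (p * q)) ^ p * W * q = (A * p) ^ p * (2 * (W * (q ^ p * q))) := by ring
    _ ≤ (A * p) ^ p * (2 ^ p * (W * (t ^ p * t))) := by gcongr
    _ = (A * p) ^ p * (2 ^ p * (W * t ^ p * t)) := by ring
    _ ≤ (A * p) ^ p * (2 ^ p * (K * t)) := by gcongr
    _ = (2 * A * p) ^ p * K * t := by ring

lemma exists_even_le_lt_add_two {t : ℝ} (ht : 2 ≤ t) :
    ∃ q : ℕ, Even q ∧ 2 ≤ q ∧ (q : ℝ) ≤ t ∧ t < q + 2 := by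
  refine ⟨2 * ⌊t / 2⌋₊, even_two_mul _, ?_, ?_, ?_⟩
  · have := Nat.le_floor (show ((1 : ℕ) : ℝ) ≤ t / 2 by push_cast; linarith)
    omega
  · push_cast
    linarith [Nat.floor_le (show 0 ≤ t / 2 by linarith)]
  · push_cast
    linarith [Nat.lt_floor_add_one (t / 2)]

section Tail

open Finset

variable {Ω : Type*} [MeasurableSpace Ω] {μ : Measure Ω} [IsProbabilityMeasure μ]
  {ι : Type*} [Fintype ι] [Nonempty ι] {w : ι → ℝ}

theorem ProbabilityTheory.iIndepFun.measure_weighted_sum_ge_le {ε : ι → Ω → ℝ}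
    (hmeas : ∀ i, Measurable (ε i)) (hind : iIndepFun ε μ) {A : ℝ} (hA : 0 < A)
    (hint : ∀ i, ∀ r : ℕ, 2 ≤ r → Integrable (fun ω => |ε i ω| ^ r) μ)
    (hmom : ∀ i, ∀ r : ℕ, 2 ≤ r → ∫ ω, |ε i ω| ^ r ∂μ ≤ A ^ r * (r : ℝ) ^ r)
    (hw : ∀ i, 0 < w i) {p q : ℕ} (hp : 1 ≤ p) (hq : Even q) (hq2 : 2 ≤ q) {t : ℝ}
    (hqt : q ≤ t) :
    μ {ω | 2 * Real.exp 1 * (2 * A * p) ^ p *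
          max (Real.sqrt (∑ i, (w i) ^ 2)) ((⨆ i, w i) * t ^ p) * t ≤
        ∑ i, w i * ((ε i ω) ^ p - ∫ ω', (ε i ω') ^ p ∂μ)} ≤
      ENNReal.ofReal (Fintype.card ι * Real.exp (-q)) := by
  set K := max (Real.sqrt (∑ i, (w i) ^ 2)) ((⨆ i, w i) * t ^ p)
  set B := (2 * A * p) ^ p * K * t
  -- chosen so that `(2 q L) ^ q = card ι * (threshold / e) ^ q`
  set L := (Fintype.card ι : ℝ) ^ (q⁻¹ : ℝ) * (B / q)
  obtain ⟨i₀⟩ := ‹Nonempty ι›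
  have hq0 : (0 : ℝ) < q := by positivity
  have ht : 0 < t := hq0.trans_le hqt
  have hWi : 0 ≤ ⨆ i, w i := (hw i₀).le.trans (le_ciSup (Finite.bddAbove_range w) i₀)
  have hK : 0 < K := (Real.sqrt_pos.2 (sum_pos (fun i _ => pow_pos (hw i) 2)
    ⟨i₀, mem_univ _⟩)).trans_le (le_max_left _ _)
  have hB : 0 < B := by positivity
  have hBL : B / q ≤ L := le_mul_of_one_le_left (by positivity)
    (Real.one_le_rpow (by exact_mod_cast Fintype.card_pos) (by positivity))
  have hLq : L ^ q = Fintype.card ι * (B / q) ^ q := by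
    rw [mul_pow, Real.rpow_inv_natCast_pow (Nat.cast_nonneg _) (by omega)]
  have hL_two : (2 * A * p) ^ p * √(∑ i, w i ^ 2) ≤ L := by
    refine le_trans ?_ hBL
    rw [le_div_iff₀ hq0]
    exact mul_le_mul (mul_le_mul_of_nonneg_left (le_max_left _ _) (by positivity)) hqt
      hq0.le (by positivity)
  have hL_sup : Fintype.card ι * (2 * (A * (p * q)) ^ p * ⨆ i, w i) ^ q ≤ L ^ q := by
    rw [hLq]
    gcongr
    rw [le_div_iff₀ hq0]
    exact two_mul_mul_pow_mul_le hA.le hWi hp hqt (le_max_right _ _)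
  obtain ⟨hint_S, hS⟩ := hind.integrable_and_integral_weighted_sum_pow_le hmeas hA.le hint hmom
    (fun i => (hw i).le) hp hq hq2 ((div_pos hB hq0).trans_le hBL) hL_two hL_sup
  have hM : 0 < 2 * Real.exp 1 * (2 * A * p) ^ p * K * t := by positivity
  refine (measure_ge_le_ofReal_integral_pow_div hq hM hint_S).trans (ENNReal.ofReal_le_ofReal ?_)
  rw [div_le_iff₀ (pow_pos hM q), show 2 * Real.exp 1 * (2 * A * p) ^ p * K * t =
    Real.exp 1 * (2 * B) by simp only [B]; ring]
  calc ∫ ω, (∑ i, w i * (ε i ω ^ p - ∫ ω', ε i ω' ^ p ∂μ)) ^ q ∂μ ≤ (2 * q * L) ^ q := hS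
    _ = Fintype.card ι * (2 * B) ^ q := by
      rw [mul_pow, hLq, div_pow, mul_pow 2 B, mul_pow]
      field_simp
    _ = Fintype.card ι * Real.exp (-q) * (Real.exp 1 * (2 * B)) ^ q := by
      rw [mul_pow (Real.exp 1), ← Real.exp_nat_mul, mul_one, mul_assoc (Fintype.card ι : ℝ),
        ← mul_assoc (Real.exp _), ← Real.exp_add, neg_add_cancel, Real.exp_zero, one_mul]

end Tail

theorem rosenthal_concentration_general
    {Ω : Type*} [MeasurableSpace Ω] (μ : Measure Ω) [IsProbabilityMeasure μ]
    (m : ℕ) (hm : 3 ≤ m)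
    (ε : Fin m → Ω → ℝ) (hmeas : ∀ i, Measurable (ε i))
    (hind : iIndepFun ε μ)
    (A : ℝ) (hA : 0 < A)
    (hint : ∀ i, ∀ r : ℕ, 2 ≤ r → Integrable (fun ω => |ε i ω| ^ r) μ)
    (hmom : ∀ i, ∀ r : ℕ, 2 ≤ r → (∫ ω, |ε i ω| ^ r ∂μ) ≤ A ^ r * (r : ℝ) ^ r)
    (w : Fin m → ℝ) (hw : ∀ i, 0 < w i)
    (p : ℕ) (hp : 1 ≤ p) (t : ℝ) :
    μ {ω | 2 * Real.exp 1 * (2 * A * p) ^ p *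
          max (Real.sqrt (∑ i, (w i) ^ 2)) ((⨆ i, w i) * t ^ p) * t ≤
        ∑ i, w i * ((ε i ω) ^ p - ∫ ω', (ε i ω') ^ p ∂μ)} ≤
      ENNReal.ofReal ((m : ℝ) * Real.exp (2 - t)) := by
  rcases le_or_gt t 2 with ht2 | ht2
  · refine prob_le_one.trans ?_
    rw [← ENNReal.ofReal_one]
    exact ENNReal.ofReal_le_ofReal (one_le_mul_of_one_le_of_one_le
      (by exact_mod_cast (by omega : 1 ≤ m)) (Real.one_le_exp (by linarith)))
  obtain ⟨q, hq, hq2, hqt, htq⟩ := exists_even_le_lt_add_two ht2.le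
  have : Nonempty (Fin m) := ⟨⟨0, by omega⟩⟩
  refine (hind.measure_weighted_sum_ge_le hmeas hA hint hmom hw hp hq hq2 hqt).trans
    (ENNReal.ofReal_le_ofReal ?_)
  rw [Fintype.card_fin]
  exact mul_le_mul_of_nonneg_left (Real.exp_le_exp.2 (by linarith)) (Nat.cast_nonneg m)

/-- Rosenthal-type concentration inequality for weighted sums of powers of independent
random variables with all moments bounded by `A^r r^r`. -/
theorem rosenthal_concentration
    {Ω : Type*} [MeasurableSpace Ω] (μ : Measure Ω) [IsProbabilityMeasure μ]
    (m : ℕ) (hm : 3 ≤ m)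
    (ε : Fin m → Ω → ℝ) (hmeas : ∀ i, Measurable (ε i))
    (hind : iIndepFun ε μ)
    (A : ℝ) (hA : 0 < A)
    (hint : ∀ i, ∀ r : ℕ, 2 ≤ r → Integrable (fun ω => |ε i ω| ^ r) μ)
    (hmom : ∀ i, ∀ r : ℕ, 2 ≤ r → (∫ ω, |ε i ω| ^ r ∂μ) ≤ A ^ r * (r : ℝ) ^ r)
    (w : Fin m → ℝ) (hw : ∀ i, 0 < w i)
    (p : ℕ) (hp : 1 ≤ p) (t : ℝ) (ht : 0 < t) :
    μ {ω | 2 * Real.exp 1 * (2 * A * p) ^ p *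
          max (Real.sqrt (∑ i, (w i) ^ 2)) ((⨆ i, w i) * t ^ p) * t ≤
        ∑ i, w i * ((ε i ω) ^ p - ∫ ω', (ε i ω') ^ p ∂μ)} ≤
      ENNReal.ofReal ((m : ℝ) * Real.exp (2 - t)) :=
  rosenthal_concentration_general μ m hm ε hmeas hind A hA hint hmom w hw p hp t
end
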